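/- Let r be a positive even integer and let u, v be vertices of the n-dimensional hypercube with Hamming distance exactly r. Then the number of vertices w such that both the Hamming distance from u to w and the Hamming distance from v to w equal r is exactly C(r, r/2) · C(n−r, r/2), where C(a,b) denotes the binomial coefficient. -/

import Mathlib

/-!
Fix `u` and encode a vertex `w` by the set `S` of coordinates where it differs from `u`. Then
`d(u, w) = |S|` and `d(v, w) = |D ∆ S|`, where `D` is the set of the `r` coordinates where `u` and
`v` differ. With `r = 2k`, the two conditions `|S| = 2k` and `|D ∆ S| = 2k` say exactly that `S`
takes `k` coordinates inside `D` and `k` outside it, which gives `C(2k, k) · C(n - 2k, k)` choices.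
-/

open Finset symmDiff

section Hypercube

variable {ι : Type*} [Fintype ι] [DecidableEq ι]

def flipOn (u : ι → Bool) (S : Finset ι) : ι → Bool := fun i => xor (u i) (decide (i ∈ S))

def flipOnEquiv (u : ι → Bool) : Finset ι ≃ (ι → Bool) where
  toFun := flipOn u
  invFun w := {i | u i ≠ w i}
  left_inv S := by ext i; rw [mem_filter_univ, flipOn]; cases u i <;> simp
  right_inv w := by funext i; simp only [flipOn, mem_filter_univ]; cases u i <;> cases w i <;> simp

theorem hammingDist_flipOn (u v : ι → Bool) (S : Finset ι) :
    hammingDist v (flipOn u S) = #(({i | u i ≠ v i} : Finset ι) ∆ S) := by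
  rw [hammingDist]; congr 1; ext i
  rw [mem_filter_univ, mem_symmDiff, mem_filter_univ, flipOn]
  cases u i <;> cases v i <;> by_cases i ∈ S <;> simp_all

theorem hammingDist_flipOn_self (u : ι → Bool) (S : Finset ι) :
    hammingDist u (flipOn u S) = #S := by
  simpa [← bot_eq_empty] using hammingDist_flipOn u u S

end Hypercube

section FinsetCard

variable {α : Type*} [DecidableEq α]

theorem Finset.card_symmDiff_eq (s t : Finset α) : #(s ∆ t) = #(s \ t) + #(t \ s) := by
  rw [Finset.symmDiff_def, card_union_of_disjoint disjoint_sdiff_sdiff]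

theorem card_eq_and_card_symmDiff_eq_iff {D S : Finset α} {k : ℕ} (hD : #D = k + k) :
    #S = k + k ∧ #(D ∆ S) = k + k ↔ #(S ∩ D) = k ∧ #(S \ D) = k := by
  have hS := card_inter_add_card_sdiff S D
  have hDS := card_inter_add_card_sdiff D S
  rw [inter_comm] at hDS
  rw [card_symmDiff_eq]
  omega

theorem card_filter_card_inter_card_sdiff [Fintype α] (D : Finset α) (a b : ℕ) :
    #{S : Finset α | #(S ∩ D) = a ∧ #(S \ D) = b} = (#D).choose a * (#Dᶜ).choose b := by
  have hsplit {A B : Finset α} (hA : A ⊆ D) (hB : B ⊆ Dᶜ) :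
      (A ∪ B) ∩ D = A ∧ (A ∪ B) \ D = B := by
    constructor <;> ext x <;> have := @hA x <;> have := @hB x <;> simp at * <;> tauto
  rw [← card_powersetCard, ← card_powersetCard, ← card_product]
  refine card_nbij' (fun S => (S ∩ D, S \ D)) (fun p => p.1 ∪ p.2) ?_ ?_ ?_ ?_
  · intro S hS
    simp_all [mem_powersetCard, subset_iff]
  · rintro ⟨A, B⟩ h
    simp only [coe_product, Set.mem_prod, mem_coe, mem_powersetCard] at h
    simp [hsplit h.1.1 h.2.1, h.1.2, h.2.2]
  · intro S _
    exact sup_inf_sdiff S D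
  · rintro ⟨A, B⟩ h
    simp only [coe_product, Set.mem_prod, mem_coe, mem_powersetCard] at h
    simp [hsplit h.1.1 h.2.1]

end FinsetCard

theorem card_common_neighbors_distance_graph_general
    (n r : ℕ) (hre : Even r) (u v : Fin n → Bool)
    (huv : hammingDist u v = r) :
    (Finset.univ.filter
        (fun w : Fin n → Bool => hammingDist u w = r ∧ hammingDist v w = r)).card
      = (r.choose (r / 2)) * ((n - r).choose (r / 2)) := by
  obtain ⟨k, rfl⟩ := hre
  set D : Finset (Fin n) := {i | u i ≠ v i}
  have hD : #D = k + k := huv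
  rw [show (k + k) / 2 = k by omega]
  calc #{w | hammingDist u w = k + k ∧ hammingDist v w = k + k}
      = #{S : Finset (Fin n) | #S = k + k ∧ #(D ∆ S) = k + k} := by
        refine (card_equiv (flipOnEquiv u) fun S => ?_).symm
        simp [flipOnEquiv, hammingDist_flipOn_self, hammingDist_flipOn, D]
    _ = #{S : Finset (Fin n) | #(S ∩ D) = k ∧ #(S \ D) = k} := by
        simp_rw [card_eq_and_card_symmDiff_eq_iff hD]
    _ = (#D).choose k * (#Dᶜ).choose k := card_filter_card_inter_card_sdiff D k k
    _ = _ := by rw [card_compl, Fintype.card_fin, hD]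

/-- given two hypercube vertices at Hamming distance exactly `r` (with `r`
positive and even), the number of vertices at Hamming distance `r` from both is
`C(r, r/2) · C(n-r, r/2)`. -/
theorem card_common_neighbors_distance_graph
    (n r : ℕ) (hr : 0 < r) (hre : Even r) (u v : Fin n → Bool)
    (huv : hammingDist u v = r) :
    (Finset.univ.filter
        (fun w : Fin n → Bool => hammingDist u w = r ∧ hammingDist v w = r)).card
      = (r.choose (r / 2)) * ((n - r).choose (r / 2)) :=
  card_common_neighbors_distance_graph_general n r hre u v huv
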